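/- arXiv:1004.2757 — 2 statements merged into one kernel-verified Lean document; each statement's English description precedes it below -/
import Mathlib

section
/- Let C be an (n,k) MDS linear code over F with systematic generator matrix G = [I_k | P]. Fix a row index i* of P and a set T of δ column indices of P with 0 ≤ δ ≤ n − k, and let G' = [I_k | P'] be the matrix obtained from G by replacing the entries P[i*, c] by 0 for every c ∈ T. Then the row space C' of G' is an (n,k) linear code (G' has rank k) and d_min(C') = n − k + 1 − δ. -/
open Matrix

/-- The minimum Hamming distance of a linear code: the minimum Hamming weight of a
nonzero codeword. -/
noncomputable def dmin {F : Type*} [Field F] [DecidableEq F] {ι : Type*} [Fintype ι]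
    (C : Submodule F (ι → F)) : ℕ :=
  sInf {d | ∃ x ∈ C, x ≠ 0 ∧ hammingNorm x = d}

/-- The row space of a matrix, i.e. the linear code generated by its rows. -/
def rowSpace {F : Type*} [Field F] {κ ι : Type*} (G : Matrix κ ι F) :
    Submodule F (ι → F) :=
  Submodule.span F (Set.range fun i => G i)

/-- The systematic generator matrix `[I_k | P]`. -/
def sysGen {F : Type*} [Field F] [DecidableEq F] {k m : ℕ}
    (P : Matrix (Fin k) (Fin m) F) : Matrix (Fin k) (Fin k ⊕ Fin m) F :=
  Matrix.fromCols 1 P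

section helpers

variable {F : Type*} [Field F] [DecidableEq F]

lemma mem_rowSpace_iff {κ ι : Type*} [Fintype κ] (G : Matrix κ ι F) (x : ι → F) :
    x ∈ rowSpace G ↔ ∃ u, u ᵥ* G = x := by
  have : rowSpace G = LinearMap.range G.vecMulLinear := by
    rw [range_vecMulLinear]; rfl
  rw [this]
  simp [LinearMap.mem_range, Matrix.vecMulLinear_apply]

lemma hammingNorm_sumElim {α β : Type*} [Fintype α] [Fintype β]
    (a : α → F) (b : β → F) :
    hammingNorm (Sum.elim a b) = hammingNorm a + hammingNorm b := by
  simp only [hammingNorm]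
  rw [← Finset.univ_disjSum_univ, ← Finset.card_disjSum]
  congr 1
  ext x
  cases x <;> simp

lemma hammingNorm_le_of_agree {ι : Type*} [Fintype ι] [DecidableEq ι]
    (y y' : ι → F) (T : Finset ι) (h : ∀ c ∉ T, y c = y' c) :
    hammingNorm y ≤ hammingNorm y' + T.card := by
  have hsub : Finset.filter (fun i => y i ≠ 0) Finset.univ ⊆
      Finset.filter (fun i => y' i ≠ 0) Finset.univ ∪ T := by
    intro i hi
    simp only [Finset.mem_filter, Finset.mem_univ, true_and, ne_eq] at hi
    by_cases hiT : i ∈ T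
    · exact Finset.mem_union_right _ hiT
    · refine Finset.mem_union_left _ ?_
      simp only [Finset.mem_filter, Finset.mem_univ, true_and, ne_eq]
      rw [← h i hiT]; exact hi
  calc hammingNorm y ≤ (Finset.filter (fun i => y' i ≠ 0) Finset.univ ∪ T).card := by
        exact Finset.card_le_card hsub
    _ ≤ hammingNorm y' + T.card := Finset.card_union_le _ _

lemma vecMul_sysGen {k m : ℕ} (P : Matrix (Fin k) (Fin m) F) (u : Fin k → F) :
    u ᵥ* sysGen P = Sum.elim u (u ᵥ* P) := by
  rw [sysGen, Matrix.vecMul_fromCols, Matrix.vecMul_one]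

lemma hammingNorm_pi_single {ι : Type*} [Fintype ι] [DecidableEq ι] (i : ι) :
    hammingNorm (Pi.single i 1 : ι → F) = 1 := by
  simp only [hammingNorm]
  rw [show Finset.filter (fun j => (Pi.single i 1 : ι → F) j ≠ 0) Finset.univ = {i} from ?_]
  · simp
  · ext j
    simp [Pi.single_apply]

end helpers

/-- Zeroing `δ` entries in a single row of the parity part of a systematic MDS
generator matrix yields an `(n, k, n − k + 1 − δ)` code. -/
theorem dmin_zeroed_single_row {F : Type*} [Field F] [DecidableEq F]
    {k m : ℕ} (P : Matrix (Fin k) (Fin m) F)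
    (hMDS : dmin (rowSpace (sysGen P)) = m + 1)
    (istar : Fin k) (T : Finset (Fin m)) :
    let P' : Matrix (Fin k) (Fin m) F :=
      fun r c => if r = istar ∧ c ∈ T then 0 else P r c
    Module.finrank F (rowSpace (sysGen P')) = k ∧
      dmin (rowSpace (sysGen P')) = m + 1 - T.card := by
  intro P'
  have hδm : T.card ≤ m := by
    simpa using Finset.card_le_card (Finset.subset_univ T)
  -- every nonzero u gives weight bound for the original code
  have hlow : ∀ u : Fin k → F, u ≠ 0 →
      m + 1 ≤ hammingNorm u + hammingNorm (u ᵥ* P) := by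
    intro u hu
    have hx : (u ᵥ* sysGen P) ∈ rowSpace (sysGen P) :=
      (mem_rowSpace_iff _ _).2 ⟨u, rfl⟩
    have hxne : u ᵥ* sysGen P ≠ 0 := by
      rw [vecMul_sysGen]
      intro h
      apply hu
      funext j
      exact congrFun h (Sum.inl j)
    have : dmin (rowSpace (sysGen P)) ≤ hammingNorm (u ᵥ* sysGen P) :=
      Nat.sInf_le ⟨u ᵥ* sysGen P, hx, hxne, rfl⟩
    rw [hMDS, vecMul_sysGen, hammingNorm_sumElim] at this
    exact this
  -- all entries of row istar of P are nonzero
  have hrow : ∀ c, P istar c ≠ 0 := by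
    have := hlow (Pi.single istar 1 : Fin k → F) (by
      intro h
      have h2 : (Pi.single istar 1 : Fin k → F) istar = 0 := by rw [h]; rfl
      simp at h2)
    rw [hammingNorm_pi_single, Matrix.single_one_vecMul, Matrix.row] at this
    have hm : m ≤ hammingNorm (P istar) := by omega
    have hcard : hammingNorm (P istar) = Fintype.card (Fin m) :=
      le_antisymm hammingNorm_le_card_fintype (by simpa using hm)
    have huniv : Finset.filter (fun c => P istar c ≠ 0) Finset.univ = Finset.univ :=
      Finset.eq_univ_of_card _ hcard
    intro c
    have hc : c ∈ Finset.filter (fun c => P istar c ≠ 0) Finset.univ := by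
      rw [huniv]; exact Finset.mem_univ c
    simpa using hc
  constructor
  · -- finrank
    have hli : LinearIndependent F (fun i => sysGen P' i) := by
      have hLI : LinearIndependent F (fun i : Fin k => Pi.single i (1:F)) := by
        have h0 := (Pi.basisFun F (Fin k)).linearIndependent
        have h1 : ⇑(Pi.basisFun F (Fin k)) = fun i : Fin k => Pi.single i (1:F) :=
          funext fun i => Pi.basisFun_apply F (Fin k) i
        rwa [h1] at h0
      have hcomp : (⇑(LinearMap.funLeft F F Sum.inl) ∘ fun i : Fin k => sysGen P' i)
          = fun i : Fin k => Pi.single i (1:F) := by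
        funext i
        funext j
        simp [LinearMap.funLeft, sysGen, Matrix.fromCols, Matrix.one_apply,
          Pi.single_apply, eq_comm]
      exact LinearIndependent.of_comp (LinearMap.funLeft F F Sum.inl)
        (by rw [hcomp]; exact hLI)
    rw [rowSpace, finrank_span_eq_card hli, Fintype.card_fin]
  · -- dmin
    -- witness: row istar of sysGen P'
    have hP'row : hammingNorm (P' istar) = m - T.card := by
      simp only [hammingNorm]
      rw [show Finset.filter (fun c => P' istar c ≠ 0) Finset.univ = Tᶜ from ?_]
      · rw [Finset.card_compl, Fintype.card_fin]
      · ext c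
        by_cases hc : c ∈ T <;> simp [P', hc, hrow c]
    have hwit : m + 1 - T.card ∈ {d | ∃ x ∈ rowSpace (sysGen P'), x ≠ 0 ∧ hammingNorm x = d} := by
      refine ⟨(Pi.single istar 1 : Fin k → F) ᵥ* sysGen P',
        (mem_rowSpace_iff _ _).2 ⟨_, rfl⟩, ?_, ?_⟩
      · rw [vecMul_sysGen]
        intro h
        have := congrFun h (Sum.inl istar)
        simp at this
      · rw [vecMul_sysGen, hammingNorm_sumElim, Matrix.single_one_vecMul, Matrix.row, hP'row,
          hammingNorm_pi_single]
        omega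
    have hlb : ∀ d ∈ {d | ∃ x ∈ rowSpace (sysGen P'), x ≠ 0 ∧ hammingNorm x = d},
        m + 1 - T.card ≤ d := by
      rintro d ⟨x, hx, hxne, rfl⟩
      obtain ⟨u, rfl⟩ := (mem_rowSpace_iff _ _).1 hx
      have hu : u ≠ 0 := by
        rintro rfl
        simp [Matrix.zero_vecMul] at hxne
      have hagree : ∀ c ∉ T, (u ᵥ* P) c = (u ᵥ* P') c := by
        intro c hc
        simp only [Matrix.vecMul, dotProduct]
        refine Finset.sum_congr rfl fun r _ => ?_
        simp [P', hc]
      have hle := hammingNorm_le_of_agree (u ᵥ* P) (u ᵥ* P') T hagree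
      have := hlow u hu
      rw [vecMul_sysGen, hammingNorm_sumElim]
      omega
    exact le_antisymm (Nat.sInf_le hwit) (le_csInf ⟨_, hwit⟩ hlb)
end

section
/- In the GDNC setup with M ≥ 2, assume the row space of [I_k | P] is an (n,k) MDS code, i.e., has minimum distance M·k2 + 1. Fix any row index r and let S_r = {(i, r) : i ∈ {1,…,M}, i ≠ rb(r)} be the set of all faults affecting row r. Then |S_r| = M − 1, d_min(C(S_r)) = k2 + 1, and hence d_min(C(S_r)) + |S_r| = M + k2; in particular the minimum over all fault sets S of d_min(C(S)) + |S| equals M + k2. -/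
open Matrix

/-- GDNC setup: row `r` of `P` belongs to user block `r / k1`, column `c` to user
block `c / k2`.  A fault `(i, r)` (with `i < M` and `i ≠ r / k1`) zeroes the entries
of row `r` lying in column block `i`.  `faultyP M k1 k2 P S` is the faulty parity
matrix `P_S` resulting from the set of faults `S`. -/
def faultyP {F : Type*} [Field F] (M k1 k2 : ℕ)
    (P : Matrix (Fin (M * k1)) (Fin (M * k2)) F)
    (S : Finset (ℕ × Fin (M * k1))) : Matrix (Fin (M * k1)) (Fin (M * k2)) F :=
  fun r c => if ((c : ℕ) / k2, r) ∈ S then 0 else P r c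

/-- `S` is a set of faults: each element `(i, r)` has `i ∈ {0, …, M−1}` a user index
different from the block `r / k1` of row `r`. -/
def IsFaultSet (M k1 : ℕ) (S : Finset (ℕ × Fin (M * k1))) : Prop :=
  ∀ p ∈ S, p.1 < M ∧ (p.2 : ℕ) / k1 ≠ p.1

open Finset

set_option linter.unusedSectionVars false

section Aux
variable {F : Type*} [Field F] [DecidableEq F]

lemma mem_rowSpace_iff_s9 {k m : ℕ} (Q : Matrix (Fin k) (Fin m) F)
    (y : Fin k ⊕ Fin m → F) :
    y ∈ rowSpace (sysGen Q) ↔ ∃ x : Fin k → F, y = Sum.elim x (x ᵥ* Q) := by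
  rw [rowSpace, show (Set.range fun i => sysGen Q i) = Set.range (sysGen Q).row from rfl,
    ← _root_.range_vecMulLinear]
  constructor
  · rintro ⟨x, rfl⟩
    exact ⟨x, by simp [sysGen, Matrix.vecMulLinear_apply]⟩
  · rintro ⟨x, rfl⟩
    exact ⟨x, by simp [sysGen, Matrix.vecMulLinear_apply]⟩

lemma hammingNorm_sum_elim {k m : ℕ} (a : Fin k → F) (b : Fin m → F) :
    hammingNorm (Sum.elim a b) = hammingNorm a + hammingNorm b := by
  simp only [hammingNorm, Finset.card_filter, Fintype.sum_sum_type]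
  simp
  congr 1 <;> exact Finset.sum_congr rfl fun x _ => by split_ifs <;> simp_all

lemma sum_elim_ne_zero {k m : ℕ} {x : Fin k → F} (hx : x ≠ 0) (b : Fin m → F) :
    Sum.elim x b ≠ 0 := by
  intro h; apply hx; funext j; exact congrFun h (Sum.inl j)

/-- block weight: number of nonzero coordinates of `v` in column block `i`. -/
def bcard {m : ℕ} (k2 i : ℕ) (v : Fin m → F) : ℕ :=
  (Finset.univ.filter fun c : Fin m => (c : ℕ) / k2 = i ∧ v c ≠ 0).card

lemma card_block_le {M k2 : ℕ} (hk2 : 1 ≤ k2) (i : ℕ) :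
    (Finset.univ.filter fun c : Fin (M * k2) => (c : ℕ) / k2 = i).card ≤ k2 := by
  classical
  have := Finset.card_le_card_of_injOn (fun c : Fin (M * k2) => (c : ℕ) % k2)
    (s := Finset.univ.filter fun c : Fin (M * k2) => (c : ℕ) / k2 = i)
    (t := Finset.range k2) ?_ ?_
  · simpa using this
  · intro c hc
    exact Finset.mem_range.2 (Nat.mod_lt _ (by omega : 0 < k2))
  · intro c hc c' hc' h
    simp only [Finset.coe_filter, Set.mem_setOf_eq, Finset.mem_univ, true_and] at hc hc'
    have : (c : ℕ) = (c' : ℕ) := by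
      conv_lhs => rw [← Nat.div_add_mod (c : ℕ) k2]
      conv_rhs => rw [← Nat.div_add_mod (c' : ℕ) k2]
      have h' : (c : ℕ) % k2 = (c' : ℕ) % k2 := h
      rw [hc, hc', h']
    exact Fin.ext this

lemma bcard_le {M k2 : ℕ} (hk2 : 1 ≤ k2) (i : ℕ) (v : Fin (M * k2) → F) :
    bcard k2 i v ≤ k2 := by
  refine le_trans (Finset.card_le_card ?_) (card_block_le (M := M) hk2 i)
  intro c hc
  simp only [bcard, Finset.mem_filter] at hc ⊢
  exact ⟨hc.1, hc.2.1⟩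

lemma hammingNorm_eq_sum_bcard {M k2 : ℕ} (hk2 : 1 ≤ k2) (v : Fin (M * k2) → F) :
    hammingNorm v = ∑ i ∈ Finset.range M, bcard k2 i v := by
  classical
  rw [hammingNorm]
  rw [Finset.card_eq_sum_card_fiberwise
    (f := fun c : Fin (M * k2) => (c : ℕ) / k2) (t := Finset.range M) ?_]
  · refine Finset.sum_congr rfl fun i _ => ?_
    unfold bcard
    rw [Finset.filter_filter]
    congr 1
    ext c
    simp [and_comm]
  · intro c hc
    simp only [Finset.mem_coe, Finset.mem_range]
    exact Nat.div_lt_iff_lt_mul (by omega) |>.2 c.isLt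

lemma bcard_le_hammingNorm {M k2 : ℕ} (hk2 : 1 ≤ k2) {i : ℕ} (hi : i < M)
    (v : Fin (M * k2) → F) : bcard k2 i v ≤ hammingNorm v := by
  rw [hammingNorm_eq_sum_bcard hk2]
  exact Finset.single_le_sum (f := fun j => bcard k2 j v) (fun _ _ => Nat.zero_le _)
    (Finset.mem_range.2 hi)

lemma bcard_congr {M k2 : ℕ} {i : ℕ} {v w : Fin (M * k2) → F}
    (h : ∀ c : Fin (M * k2), (c : ℕ) / k2 = i → v c = w c) :
    bcard k2 i v = bcard k2 i w := by
  unfold bcard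
  congr 1
  ext c
  simp only [Finset.mem_filter, Finset.mem_univ, true_and]
  constructor
  · rintro ⟨h1, h2⟩; exact ⟨h1, by rw [← h c h1]; exact h2⟩
  · rintro ⟨h1, h2⟩; exact ⟨h1, by rw [h c h1]; exact h2⟩

end Aux

section MDS
variable {F : Type*} [Field F] [DecidableEq F]
variable {M k1 k2 : ℕ} {P : Matrix (Fin (M * k1)) (Fin (M * k2)) F}

lemma weight_lower (hMDS : dmin (rowSpace (sysGen P)) = M * k2 + 1)
    {x : Fin (M * k1) → F} (hx : x ≠ 0) :
    M * k2 + 1 ≤ hammingNorm x + hammingNorm (x ᵥ* P) := by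
  have hz : Sum.elim x (x ᵥ* P) ∈ rowSpace (sysGen P) := (mem_rowSpace_iff_s9 _ _).2 ⟨x, rfl⟩
  have hmem : hammingNorm x + hammingNorm (x ᵥ* P) ∈
      {d | ∃ z ∈ rowSpace (sysGen P), z ≠ 0 ∧ hammingNorm z = d} :=
    ⟨_, hz, sum_elim_ne_zero hx _, hammingNorm_sum_elim _ _⟩
  have h := Nat.sInf_le hmem
  rw [← hMDS]
  exact h

lemma block_lower (hk2 : 1 ≤ k2) (hMDS : dmin (rowSpace (sysGen P)) = M * k2 + 1)
    {y : Fin (M * k1) → F} (hy : y ≠ 0) {i : ℕ} (hi : i < M) :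
    k2 + 1 ≤ hammingNorm y + bcard k2 i (y ᵥ* P) := by
  have hw := weight_lower hMDS hy
  rw [hammingNorm_eq_sum_bcard hk2] at hw
  have hsplit : bcard k2 i (y ᵥ* P) + ∑ j ∈ (Finset.range M).erase i, bcard k2 j (y ᵥ* P)
      = ∑ j ∈ Finset.range M, bcard k2 j (y ᵥ* P) :=
    Finset.add_sum_erase _ (fun j => bcard k2 j (y ᵥ* P)) (Finset.mem_range.2 hi)
  have h2 : ∑ j ∈ (Finset.range M).erase i, bcard k2 j (y ᵥ* P)
      ≤ ∑ j ∈ (Finset.range M).erase i, k2 :=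
    Finset.sum_le_sum fun j _ => bcard_le hk2 j _
  have h3 : k2 + ∑ j ∈ (Finset.range M).erase i, k2 = M * k2 := by
    have := Finset.add_sum_erase (Finset.range M) (fun _ => k2) (Finset.mem_range.2 hi)
    simpa using this
  linarith

lemma dmin_faulty_codeword_lower (hk1 : 1 ≤ k1) (hk2 : 1 ≤ k2)
    (hMDS : dmin (rowSpace (sysGen P)) = M * k2 + 1)
    {S : Finset (ℕ × Fin (M * k1))} (hS : IsFaultSet M k1 S)
    {x : Fin (M * k1) → F} (hx : x ≠ 0) :
    k2 + 1 ≤ hammingNorm x + hammingNorm (x ᵥ* faultyP M k1 k2 P S) := by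
  obtain ⟨r0, hr0⟩ : ∃ r0, x r0 ≠ 0 := by
    by_contra h; push_neg at h; exact hx (funext h)
  set i0 := (r0 : ℕ) / k1 with hi0def
  have hi0 : i0 < M := (Nat.div_lt_iff_lt_mul (by omega)).2 r0.isLt
  set y : Fin (M * k1) → F := fun r' => if (i0, r') ∈ S then 0 else x r' with hydef
  have hy0 : y r0 = x r0 := by
    simp only [hydef]
    rw [if_neg]
    intro hmem
    exact (hS _ hmem).2 rfl
  have hy : y ≠ 0 := by
    intro h
    apply hr0
    rw [← hy0, h]
    rfl
  have hagree : ∀ c : Fin (M * k2), (c : ℕ) / k2 = i0 →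
      (x ᵥ* faultyP M k1 k2 P S) c = (y ᵥ* P) c := by
    intro c hc
    simp only [Matrix.vecMul, dotProduct, faultyP, hc, hydef]
    exact Finset.sum_congr rfl fun r' _ => by split <;> simp
  have hb : bcard k2 i0 (x ᵥ* faultyP M k1 k2 P S) = bcard k2 i0 (y ᵥ* P) :=
    bcard_congr hagree
  have h1 := block_lower hk2 hMDS hy hi0
  have h2 : hammingNorm y ≤ hammingNorm x := by
    apply Finset.card_le_card
    intro c hc
    simp only [Finset.mem_filter, Finset.mem_univ, true_and, hydef] at hc ⊢
    intro h0
    apply hc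
    split
    · rfl
    · exact h0
  have h3 : bcard k2 i0 (x ᵥ* faultyP M k1 k2 P S)
      ≤ hammingNorm (x ᵥ* faultyP M k1 k2 P S) := bcard_le_hammingNorm hk2 hi0 _
  omega

end MDS

section MDS2
variable {F : Type*} [Field F] [DecidableEq F]
variable {M k1 k2 : ℕ} {P : Matrix (Fin (M * k1)) (Fin (M * k2)) F}

lemma composite_codeword_lower (hk1 : 1 ≤ k1) (hk2 : 1 ≤ k2)
    (hMDS : dmin (rowSpace (sysGen P)) = M * k2 + 1)
    {S : Finset (ℕ × Fin (M * k1))} (hS : IsFaultSet M k1 S)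
    {x : Fin (M * k1) → F} (hx : x ≠ 0) :
    M + k2 ≤ hammingNorm x + hammingNorm (x ᵥ* faultyP M k1 k2 P S) + S.card := by
  by_cases hcase : M ≤ S.card + 1
  · have h := dmin_faulty_codeword_lower hk1 hk2 hMDS hS hx
    omega
  · push_neg at hcase
    set D := S.filter (fun p => x p.2 ≠ 0) with hDdef
    set I := D.image Prod.fst with hIdef
    have hqt : I.card ≤ S.card :=
      le_trans Finset.card_image_le (Finset.card_le_card (Finset.filter_subset _ _))
    have hIsub : I ⊆ Finset.range M := by
      intro i hi
      obtain ⟨p, hp, rfl⟩ := Finset.mem_image.1 hi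
      exact Finset.mem_range.2 (hS p (Finset.mem_filter.1 hp).1).1
    have hagree : ∀ i ∈ Finset.range M \ I, ∀ c : Fin (M * k2), (c : ℕ) / k2 = i →
        (x ᵥ* faultyP M k1 k2 P S) c = (x ᵥ* P) c := by
      intro i hi c hc
      simp only [Matrix.vecMul, dotProduct, faultyP, hc]
      refine Finset.sum_congr rfl fun r' _ => ?_
      by_cases hm : (i, r') ∈ S
      · rw [if_pos hm]
        have hx0 : x r' = 0 := by
          by_contra hx0
          have : (i, r') ∈ D := Finset.mem_filter.2 ⟨hm, hx0⟩
          have : i ∈ I := Finset.mem_image.2 ⟨(i, r'), this, rfl⟩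
          exact (Finset.mem_sdiff.1 hi).2 this
        simp [hx0]
      · rw [if_neg hm]
    have hRsum : ∑ i ∈ Finset.range M \ I, bcard k2 i (x ᵥ* faultyP M k1 k2 P S)
        = ∑ i ∈ Finset.range M \ I, bcard k2 i (x ᵥ* P) :=
      Finset.sum_congr rfl fun i hi => bcard_congr (hagree i hi)
    have hR_le : ∑ i ∈ Finset.range M \ I, bcard k2 i (x ᵥ* P)
        ≤ hammingNorm (x ᵥ* faultyP M k1 k2 P S) := by
      rw [← hRsum, hammingNorm_eq_sum_bcard hk2]
      exact Finset.sum_le_sum_of_subset (Finset.sdiff_subset)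
    have hsplit : ∑ i ∈ Finset.range M \ I, bcard k2 i (x ᵥ* P)
        + ∑ i ∈ I, bcard k2 i (x ᵥ* P) = ∑ i ∈ Finset.range M, bcard k2 i (x ᵥ* P) :=
      Finset.sum_sdiff hIsub
    have hIle : ∑ i ∈ I, bcard k2 i (x ᵥ* P) ≤ I.card * k2 := by
      calc ∑ i ∈ I, bcard k2 i (x ᵥ* P) ≤ ∑ _i ∈ I, k2 :=
            Finset.sum_le_sum fun i _ => bcard_le hk2 i _
        _ = I.card * k2 := by rw [Finset.sum_const, smul_eq_mul]
    have hMDSx := weight_lower hMDS hx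
    rw [hammingNorm_eq_sum_bcard hk2 (x ᵥ* P)] at hMDSx
    have hq2 : I.card + 2 ≤ M := by omega
    have hmul1 : I.card * k2 + (M - I.card) * k2 = M * k2 := by
      rw [← Nat.add_mul]
      congr 1
      omega
    have hmul2 : (M - I.card) * k2 = (M - I.card - 1) * k2 + k2 := by
      obtain ⟨a, ha⟩ : ∃ a, M - I.card - 1 = a := ⟨_, rfl⟩
      rw [ha, show M - I.card = a + 1 by omega, Nat.succ_mul]
    have hmul3 : (M - I.card - 1) ≤ (M - I.card - 1) * k2 :=
      Nat.le_mul_of_pos_right _ (by omega)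
    have hq3 : I.card + (M - I.card) = M := by omega
    have hq4 : (M - I.card - 1) + 1 = M - I.card := by omega
    linarith

end MDS2

section Dmin
variable {F : Type*} [Field F] [DecidableEq F]
variable {M k1 k2 : ℕ} {P : Matrix (Fin (M * k1)) (Fin (M * k2)) F}

lemma hammingNorm_single {k : ℕ} (r : Fin k) : hammingNorm (Pi.single r (1 : F) : Fin k → F) = 1 := by
  unfold hammingNorm
  have h : (Finset.univ.filter fun j : Fin k => (Pi.single r (1 : F) : Fin k → F) j ≠ 0) = {r} := by
    ext j
    by_cases h : j = r <;> simp [Pi.single_apply, h]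
  rw [h, Finset.card_singleton]

lemma dmin_set_nonempty {k m : ℕ} (Q : Matrix (Fin k) (Fin m) F) (r : Fin k) :
    (1 + hammingNorm (fun c => Q r c)) ∈
      {d | ∃ z ∈ rowSpace (sysGen Q), z ≠ 0 ∧ hammingNorm z = d} := by
  refine ⟨Sum.elim (Pi.single r 1) ((Pi.single r 1) ᵥ* Q),
    (mem_rowSpace_iff_s9 _ _).2 ⟨_, rfl⟩, sum_elim_ne_zero ?_ _, ?_⟩
  case refine_1 =>
    intro h
    have := congrFun h r
    simp [Pi.single_eq_same] at this
  case refine_2 =>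
    rw [hammingNorm_sum_elim, hammingNorm_single, Matrix.single_one_vecMul]
    rfl

lemma dmin_faulty_lower (hk1 : 1 ≤ k1) (hk2 : 1 ≤ k2)
    (hMDS : dmin (rowSpace (sysGen P)) = M * k2 + 1)
    {S : Finset (ℕ × Fin (M * k1))} (hS : IsFaultSet M k1 S) (r : Fin (M * k1)) :
    k2 + 1 ≤ dmin (rowSpace (sysGen (faultyP M k1 k2 P S))) := by
  have hne : {d | ∃ z ∈ rowSpace (sysGen (faultyP M k1 k2 P S)), z ≠ 0 ∧
      hammingNorm z = d}.Nonempty := ⟨_, dmin_set_nonempty _ r⟩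
  obtain ⟨z, hzmem, hz0, hzn⟩ := Nat.sInf_mem hne
  obtain ⟨x, rfl⟩ := (mem_rowSpace_iff_s9 _ _).1 hzmem
  have hx : x ≠ 0 := by
    rintro rfl
    apply hz0
    funext j
    cases j <;> simp [Matrix.zero_vecMul]
  rw [dmin, ← hzn, hammingNorm_sum_elim]
  exact dmin_faulty_codeword_lower hk1 hk2 hMDS hS hx

lemma dmin_composite_lower (hk1 : 1 ≤ k1) (hk2 : 1 ≤ k2)
    (hMDS : dmin (rowSpace (sysGen P)) = M * k2 + 1)
    {S : Finset (ℕ × Fin (M * k1))} (hS : IsFaultSet M k1 S) (r : Fin (M * k1)) :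
    M + k2 ≤ dmin (rowSpace (sysGen (faultyP M k1 k2 P S))) + S.card := by
  have hne : {d | ∃ z ∈ rowSpace (sysGen (faultyP M k1 k2 P S)), z ≠ 0 ∧
      hammingNorm z = d}.Nonempty := ⟨_, dmin_set_nonempty _ r⟩
  obtain ⟨z, hzmem, hz0, hzn⟩ := Nat.sInf_mem hne
  obtain ⟨x, rfl⟩ := (mem_rowSpace_iff_s9 _ _).1 hzmem
  have hx : x ≠ 0 := by
    rintro rfl
    apply hz0
    funext j
    cases j <;> simp [Matrix.zero_vecMul]
  rw [dmin, ← hzn, hammingNorm_sum_elim]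
  exact composite_codeword_lower hk1 hk2 hMDS hS hx

end Dmin

/-- For an MDS network code in the GDNC setup with `M ≥ 2`, the set `S_r` of all
`M − 1` faults affecting a fixed row `r` satisfies `|S_r| = M − 1`,
`d_min(C(S_r)) = k2 + 1`, hence `d_min(C(S_r)) + |S_r| = M + k2`; and this is the
minimum of `d_min(C(S)) + |S|` over all fault sets `S`. -/
theorem composite_distance_min_attained {F : Type*} [Field F] [DecidableEq F]
    (M k1 k2 : ℕ) (hM : 2 ≤ M) (hk1 : 1 ≤ k1) (hk2 : 1 ≤ k2)
    (P : Matrix (Fin (M * k1)) (Fin (M * k2)) F)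
    (hMDS : dmin (rowSpace (sysGen P)) = M * k2 + 1)
    (r : Fin (M * k1)) :
    let Sr : Finset (ℕ × Fin (M * k1)) :=
      ((Finset.range M).filter fun i => i ≠ (r : ℕ) / k1).image fun i => (i, r)
    Sr.card = M - 1 ∧
      dmin (rowSpace (sysGen (faultyP M k1 k2 P Sr))) = k2 + 1 ∧
      dmin (rowSpace (sysGen (faultyP M k1 k2 P Sr))) + Sr.card = M + k2 ∧
      sInf {d | ∃ S : Finset (ℕ × Fin (M * k1)), IsFaultSet M k1 S ∧
        d = dmin (rowSpace (sysGen (faultyP M k1 k2 P S))) + S.card} = M + k2 := by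
  intro Sr
  have hSr : Sr = ((Finset.range M).filter fun i => i ≠ (r : ℕ) / k1).image fun i => (i, r) :=
    rfl
  have h0 : (r : ℕ) / k1 < M := (Nat.div_lt_iff_lt_mul (by omega)).2 r.isLt
  -- cardinality of Sr
  have hSrcard : Sr.card = M - 1 := by
    rw [hSr, Finset.card_image_of_injective _ (fun a b h => (Prod.ext_iff.1 h).1),
      Finset.filter_ne', Finset.card_erase_of_mem (Finset.mem_range.2 h0),
      Finset.card_range]
  -- Sr is a fault set
  have hSrfault : IsFaultSet M k1 Sr := by
    intro p hp
    rw [hSr] at hp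
    obtain ⟨i, hi, rfl⟩ := Finset.mem_image.1 hp
    obtain ⟨hiM, hine⟩ := Finset.mem_filter.1 hi
    exact ⟨Finset.mem_range.1 hiM, Ne.symm hine⟩
  -- upper bound for dmin of the faulty code
  have hub : dmin (rowSpace (sysGen (faultyP M k1 k2 P Sr))) ≤ k2 + 1 := by
    have hmem := dmin_set_nonempty (faultyP M k1 k2 P Sr) r
    have h1 : hammingNorm (fun c => faultyP M k1 k2 P Sr r c) ≤ k2 := by
      refine le_trans (Finset.card_le_card ?_) (card_block_le (M := M) hk2 ((r : ℕ) / k1))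
      intro c hc
      simp only [Finset.mem_filter, Finset.mem_univ, true_and] at hc ⊢
      by_contra hne
      apply hc
      have hcM : (c : ℕ) / k2 < M := (Nat.div_lt_iff_lt_mul (by omega)).2 c.isLt
      have : ((c : ℕ) / k2, r) ∈ Sr := by
        rw [hSr]
        exact Finset.mem_image.2 ⟨(c : ℕ) / k2,
          Finset.mem_filter.2 ⟨Finset.mem_range.2 hcM, hne⟩, rfl⟩
      simp [faultyP, this]
    have h2 := Nat.sInf_le hmem
    rw [dmin]
    omega
  have hlb := dmin_faulty_lower hk1 hk2 hMDS hSrfault r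
  have hdmin : dmin (rowSpace (sysGen (faultyP M k1 k2 P Sr))) = k2 + 1 :=
    le_antisymm hub hlb
  have hmemset : (M + k2) ∈ {d | ∃ S : Finset (ℕ × Fin (M * k1)), IsFaultSet M k1 S ∧
      d = dmin (rowSpace (sysGen (faultyP M k1 k2 P S))) + S.card} :=
    ⟨Sr, hSrfault, by rw [hdmin, hSrcard]; omega⟩
  refine ⟨hSrcard, hdmin, by omega, le_antisymm (Nat.sInf_le hmemset)
    (le_csInf ⟨_, hmemset⟩ ?_)⟩
  rintro b ⟨S, hS, rfl⟩
  exact dmin_composite_lower hk1 hk2 hMDS hS r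
end
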